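/- Let C be an elasticity tensor with harmonic components (λ, μ, a, b, D) as in the harmonic decomposition. If the stabilizer of d₂(D) in SO(3) is contained both in the stabilizer of a and in the stabilizer of b (the material genericity assumption), then the stabilizer of C in SO(3) equals the stabilizer of D: {g ∈ SO(3) | g·C = C} = {g ∈ SO(3) | g·D = D}. -/

import Mathlib

open Matrix BigOperators

abbrev Mat3 := Matrix (Fin 3) (Fin 3) ℝ
abbrev T4 := Fin 3 → Fin 3 → Fin 3 → Fin 3 → ℝ

/-- `g ∈ SO(3)`: real orthogonal 3×3 matrix of determinant 1. -/
def IsSO3 (g : Mat3) : Prop := g * gᵀ = 1 ∧ g.det = 1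

/-- A harmonic fourth-order tensor: totally symmetric and traceless. -/
def IsHarm (D : T4) : Prop :=
  (∀ i j k l, D i j k l = D j i k l) ∧
  (∀ i j k l, D i j k l = D i k j l) ∧
  (∀ i j k l, D i j k l = D i j l k) ∧
  (∀ i j, ∑ k, D k k i j = 0)

/-- The action of a rotation `g` on a fourth-order tensor. -/
noncomputable def act (g : Mat3) (D : T4) : T4 := fun i j k l =>
  ∑ p, ∑ q, ∑ r, ∑ s, g i p * g j q * g k r * g l s * D p q r s

/-- `D²`, the square of a fourth-order tensor. -/
noncomputable def sqT (D : T4) : T4 := fun i j k l => ∑ p, ∑ q, D i j p q * D p q k l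

/-- `D³`, the cube of a fourth-order tensor. -/
noncomputable def cbT (D : T4) : T4 := fun i j k l => ∑ p, ∑ q, sqT D i j p q * D p q k l

/-- The second-order Boehler covariant `d₂(D) j l = ∑ᵢ (D²) i j i l`. -/
noncomputable def d2 (D : T4) : Mat3 := Matrix.of fun j l => ∑ i, sqT D i j i l

/-- The second-order covariant `d₃(D) j l = ∑ᵢ (D³) i j i l`. -/
noncomputable def d3 (D : T4) : Mat3 := Matrix.of fun j l => ∑ i, cbT D i j i l

/-- Fundamental invariant `J₂ = tr d₂`. -/
noncomputable def J2 (D : T4) : ℝ := (d2 D).trace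
/-- Fundamental invariant `J₃ = tr d₃`. -/
noncomputable def J3 (D : T4) : ℝ := (d3 D).trace
/-- Fundamental invariant `J₄ = tr(d₂²)`. -/
noncomputable def J4 (D : T4) : ℝ := (d2 D * d2 D).trace
/-- Fundamental invariant `J₅ = ∑ (d₂)ᵢⱼ D i j k l (d₂)ₖₗ`. -/
noncomputable def J5 (D : T4) : ℝ :=
  ∑ i, ∑ j, ∑ k, ∑ l, d2 D i j * D i j k l * d2 D k l
/-- Fundamental invariant `J₆ = tr(d₂³)`. -/
noncomputable def J6 (D : T4) : ℝ := (d2 D * d2 D * d2 D).trace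
/-- Fundamental invariant `J₇ = ∑ (d₂²)ᵢⱼ D i j k l (d₂)ₖₗ`. -/
noncomputable def J7 (D : T4) : ℝ :=
  ∑ i, ∑ j, ∑ k, ∑ l, (d2 D * d2 D) i j * D i j k l * d2 D k l
/-- Fundamental invariant `J₈ = ∑ (d₂²)ᵢⱼ (D²) i j k l (d₂)ₖₗ`. -/
noncomputable def J8 (D : T4) : ℝ :=
  ∑ i, ∑ j, ∑ k, ∑ l, (d2 D * d2 D) i j * sqT D i j k l * d2 D k l
/-- Fundamental invariant `J₉ = ∑ (d₂²)ᵢⱼ D i j k l (d₂²)ₖₗ`. -/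
noncomputable def J9 (D : T4) : ℝ :=
  ∑ i, ∑ j, ∑ k, ∑ l, (d2 D * d2 D) i j * D i j k l * (d2 D * d2 D) k l
/-- Fundamental invariant `J₁₀ = ∑ (d₂²)ᵢⱼ (D²) i j k l (d₂²)ₖₗ`. -/
noncomputable def J10 (D : T4) : ℝ :=
  ∑ i, ∑ j, ∑ k, ∑ l, (d2 D * d2 D) i j * sqT D i j k l * (d2 D * d2 D) k l

/-- The totally symmetric tensor whose value at `(i,j,k,l)` depends only on the
multiset of indices `{i,j,k,l}`. -/
noncomputable def symT (f : Multiset (Fin 3) → ℝ) : T4 := fun i j k l => f {i, j, k, l}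

/-- Kronecker delta on `Fin 3`. -/
def kd (i j : Fin 3) : ℝ := if i = j then 1 else 0

/-- An elasticity tensor: minor and major index symmetries. -/
def IsEla (C : T4) : Prop :=
  ∀ i j k l, C i j k l = C j i k l ∧ C i j k l = C i j l k ∧ C i j k l = C k l i j

/-- The harmonic decomposition equation `C = (λ, μ, a, b, D)`. -/
def HarmDecomp (C : T4) (lam mu : ℝ) (a b : Mat3) (D : T4) : Prop :=
  ∀ i j k l, C i j k l =
    lam * kd i j * kd k l + mu * (kd i k * kd j l + kd i l * kd j k) +
    kd i j * a k l + kd k l * a i j +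
    kd i k * b j l + kd j l * b i k + kd i l * b j k + kd j k * b i l +
    D i j k l

/-! The harmonic decomposition is equivariant: `g • C` has components
`(λ, μ, g a gᵀ, g b gᵀ, g • D)`. If `g` fixes `D`, it fixes `d₂(D)`, hence `a` and `b` by the
genericity assumption, hence `C`. Conversely, since `D` is traceless and `a`, `b` are symmetric,
the two partial traces of `C` are `(3λ + 2μ + tr a) 1 + 3a + 4b` and `(λ + 4μ + tr b) 1 + 2a + 5b`,
so `a` and `b` lie in the span of these traces and `1`. Partial traces are equivariant, so a `g`
fixing `C` fixes `a` and `b`, and then comparing the two decompositions of `C = g • C` gives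
`g • D = D`. -/

lemma Matrix.mul_mul_transpose_apply {n R : Type*} [Fintype n] [CommSemiring R]
    (g m : Matrix n n R) (i j : n) :
    (g * m * gᵀ) i j = ∑ p, ∑ q, g i p * g j q * m p q := by
  simp only [Matrix.mul_apply, Matrix.transpose_apply, Finset.sum_mul]
  rw [Finset.sum_comm]
  exact Fintype.sum_congr _ _ fun p => Fintype.sum_congr _ _ fun q => by ring

lemma Matrix.mul_mul_transpose_eq_self_of_mem_span {n R : Type*} [Fintype n] [CommRing R]
    (g : Matrix n n R) {s : Set (Matrix n n R)} (hs : ∀ x ∈ s, g * x * gᵀ = x)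
    {x : Matrix n n R} (hx : x ∈ Submodule.span R s) : g * x * gᵀ = x := by
  induction hx using Submodule.span_induction with
  | mem x h => exact hs x h
  | zero => simp
  | add x y _ _ hx hy => rw [Matrix.mul_add, Matrix.add_mul, hx, hy]
  | smul c x _ hx => rw [Matrix.mul_smul, Matrix.smul_mul, hx]

def tprod₁₂ (m n : Mat3) : T4 := fun i j k l => m i j * n k l
def tprod₁₃ (m n : Mat3) : T4 := fun i j k l => m i k * n j l
def tprod₁₄ (m n : Mat3) : T4 := fun i j k l => m i l * n j k

def ofHarmComponents (lam mu : ℝ) (a b : Mat3) (D : T4) : T4 :=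
  lam • tprod₁₂ 1 1 + mu • (tprod₁₃ 1 1 + tprod₁₄ 1 1) + (tprod₁₂ 1 a + tprod₁₂ a 1) +
    (tprod₁₃ 1 b + tprod₁₃ b 1 + tprod₁₄ 1 b + tprod₁₄ b 1) + D

lemma harmDecomp_iff {C : T4} {lam mu : ℝ} {a b : Mat3} {D : T4} :
    HarmDecomp C lam mu a b D ↔ C = ofHarmComponents lam mu a b D := by
  have h : ∀ i j k l, ofHarmComponents lam mu a b D i j k l =
      lam * kd i j * kd k l + mu * (kd i k * kd j l + kd i l * kd j k) +
      kd i j * a k l + kd k l * a i j +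
      kd i k * b j l + kd j l * b i k + kd i l * b j k + kd j k * b i l + D i j k l := by
    intro i j k l
    simp only [ofHarmComponents, tprod₁₂, tprod₁₃, tprod₁₄, Pi.add_apply, Pi.smul_apply,
      smul_eq_mul, Matrix.one_apply, kd]
    ring
  simp only [HarmDecomp, funext_iff, h]

section act

variable (g : Mat3)

lemma act_add (T T' : T4) : act g (T + T') = act g T + act g T' := by
  funext i j k l
  simp only [act, Pi.add_apply, mul_add, Finset.sum_add_distrib]

lemma act_smul (c : ℝ) (T : T4) : act g (c • T) = c • act g T := by
  funext i j k l
  simp only [act, Pi.smul_apply, smul_eq_mul, Finset.mul_sum, mul_assoc, mul_left_comm c]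

lemma act_tprod₁₂ (m n : Mat3) : act g (tprod₁₂ m n) = tprod₁₂ (g * m * gᵀ) (g * n * gᵀ) := by
  funext i j k l
  simp only [act, tprod₁₂, Matrix.mul_mul_transpose_apply, Fin.sum_univ_three]
  ring

lemma act_tprod₁₃ (m n : Mat3) : act g (tprod₁₃ m n) = tprod₁₃ (g * m * gᵀ) (g * n * gᵀ) := by
  funext i j k l
  simp only [act, tprod₁₃, Matrix.mul_mul_transpose_apply, Fin.sum_univ_three]
  ring

lemma act_tprod₁₄ (m n : Mat3) : act g (tprod₁₄ m n) = tprod₁₄ (g * m * gᵀ) (g * n * gᵀ) := by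
  funext i j k l
  simp only [act, tprod₁₄, Matrix.mul_mul_transpose_apply, Fin.sum_univ_three]
  ring

lemma act_ofHarmComponents {g : Mat3} (hg : g * gᵀ = 1) (lam mu : ℝ) (a b : Mat3) (D : T4) :
    act g (ofHarmComponents lam mu a b D) =
      ofHarmComponents lam mu (g * a * gᵀ) (g * b * gᵀ) (act g D) := by
  simp only [ofHarmComponents, act_add, act_smul, act_tprod₁₂, act_tprod₁₃, act_tprod₁₄,
    Matrix.mul_one, hg]

end act

def trace₁₂ (T : T4) : Mat3 := Matrix.of fun i j => ∑ k, T k k i j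
def trace₁₃ (T : T4) : Mat3 := Matrix.of fun i j => ∑ k, T k i k j

lemma d2_eq_trace₁₃_sqT (D : T4) : d2 D = trace₁₃ (sqT D) := rfl

section trace

variable (T T' : T4) (m n : Mat3)

lemma trace₁₂_add : trace₁₂ (T + T') = trace₁₂ T + trace₁₂ T' := by
  ext i j
  simp [trace₁₂, Finset.sum_add_distrib]

lemma trace₁₂_smul (c : ℝ) : trace₁₂ (c • T) = c • trace₁₂ T := by
  ext i j
  simp [trace₁₂, Finset.mul_sum]

lemma trace₁₃_add : trace₁₃ (T + T') = trace₁₃ T + trace₁₃ T' := by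
  ext i j
  simp [trace₁₃, Finset.sum_add_distrib]

lemma trace₁₃_smul (c : ℝ) : trace₁₃ (c • T) = c • trace₁₃ T := by
  ext i j
  simp [trace₁₃, Finset.mul_sum]

lemma trace₁₂_tprod₁₂ : trace₁₂ (tprod₁₂ m n) = m.trace • n := by
  ext i j
  simp [trace₁₂, tprod₁₂, Matrix.trace, Finset.sum_mul]

lemma trace₁₂_tprod₁₃ : trace₁₂ (tprod₁₃ m n) = mᵀ * n := by
  ext i j
  simp [trace₁₂, tprod₁₃, Matrix.mul_apply]

lemma trace₁₂_tprod₁₄ : trace₁₂ (tprod₁₄ m n) = nᵀ * m := by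
  ext i j
  simp [trace₁₂, tprod₁₄, Matrix.mul_apply, mul_comm]

lemma trace₁₃_tprod₁₂ : trace₁₃ (tprod₁₂ m n) = mᵀ * n := by
  ext i j
  simp [trace₁₃, tprod₁₂, Matrix.mul_apply]

lemma trace₁₃_tprod₁₃ : trace₁₃ (tprod₁₃ m n) = m.trace • n := by
  ext i j
  simp [trace₁₃, tprod₁₃, Matrix.trace, Finset.sum_mul]

lemma trace₁₃_tprod₁₄ : trace₁₃ (tprod₁₄ m n) = n * m := by
  ext i j
  simp [trace₁₃, tprod₁₄, Matrix.mul_apply, mul_comm]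

end trace

lemma trace₁₂_ofHarmComponents (lam mu : ℝ) (a b : Mat3) (D : T4) :
    trace₁₂ (ofHarmComponents lam mu a b D) =
      (3 * lam + 2 * mu + a.trace) • 1 + (3 : ℝ) • a + (2 : ℝ) • (b + bᵀ) + trace₁₂ D := by
  simp only [ofHarmComponents, trace₁₂_add, trace₁₂_smul, trace₁₂_tprod₁₂, trace₁₂_tprod₁₃,
    trace₁₂_tprod₁₄, Matrix.trace_one, Matrix.transpose_one, Matrix.one_mul, Matrix.mul_one,
    Fintype.card_fin, Nat.cast_ofNat]
  module

lemma trace₁₃_ofHarmComponents (lam mu : ℝ) (a b : Mat3) (D : T4) :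
    trace₁₃ (ofHarmComponents lam mu a b D) =
      (lam + 4 * mu + b.trace) • 1 + (a + aᵀ) + (5 : ℝ) • b + trace₁₃ D := by
  simp only [ofHarmComponents, trace₁₃_add, trace₁₃_smul, trace₁₃_tprod₁₂, trace₁₃_tprod₁₃,
    trace₁₃_tprod₁₄, Matrix.trace_one, Matrix.transpose_one, Matrix.one_mul, Matrix.mul_one,
    Fintype.card_fin, Nat.cast_ofNat]
  module

lemma IsHarm.trace₁₂_eq_zero {D : T4} (hD : IsHarm D) : trace₁₂ D = 0 := by
  ext i j
  exact hD.2.2.2 i j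

lemma IsHarm.trace₁₃_eq_zero {D : T4} (hD : IsHarm D) : trace₁₃ D = 0 := by
  ext i j
  rw [Matrix.zero_apply, ← hD.2.2.2 i j]
  exact Fintype.sum_congr _ _ fun k => hD.2.1 k i k j

lemma mem_span_traces_of_eq_ofHarmComponents {C : T4} {lam mu : ℝ} {a b : Mat3} {D : T4}
    (ha : aᵀ = a) (hb : bᵀ = b) (hD₁₂ : trace₁₂ D = 0) (hD₁₃ : trace₁₃ D = 0)
    (hC : C = ofHarmComponents lam mu a b D) :
    a ∈ Submodule.span ℝ {trace₁₂ C, trace₁₃ C, 1} ∧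
      b ∈ Submodule.span ℝ {trace₁₂ C, trace₁₃ C, 1} := by
  obtain ⟨c₁, hP⟩ : ∃ c₁ : ℝ, trace₁₂ C = c₁ • 1 + (3 : ℝ) • a + (4 : ℝ) • b :=
    ⟨3 * lam + 2 * mu + a.trace, by rw [hC, trace₁₂_ofHarmComponents, hb, hD₁₂]; module⟩
  obtain ⟨c₂, hQ⟩ : ∃ c₂ : ℝ, trace₁₃ C = c₂ • 1 + (2 : ℝ) • a + (5 : ℝ) • b :=
    ⟨lam + 4 * mu + b.trace, by rw [hC, trace₁₃_ofHarmComponents, ha, hD₁₃]; module⟩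
  set P := trace₁₂ C
  set Q := trace₁₃ C
  have hP_mem : P ∈ Submodule.span ℝ {P, Q, 1} := Submodule.subset_span (by simp)
  have hQ_mem : Q ∈ Submodule.span ℝ {P, Q, 1} := Submodule.subset_span (by simp)
  have h1_mem : (1 : Mat3) ∈ Submodule.span ℝ {P, Q, 1} := Submodule.subset_span (by simp)
  constructor
  · have ha_eq : a = (5 / 7 : ℝ) • P - (4 / 7 : ℝ) • Q + ((4 * c₂ - 5 * c₁) / 7) • 1 := by
      rw [hP, hQ]
      module
    rw [ha_eq]
    exact add_mem (sub_mem (Submodule.smul_mem _ _ hP_mem) (Submodule.smul_mem _ _ hQ_mem))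
      (Submodule.smul_mem _ _ h1_mem)
  · have hb_eq : b = (3 / 7 : ℝ) • Q - (2 / 7 : ℝ) • P + ((2 * c₁ - 3 * c₂) / 7) • 1 := by
      rw [hP, hQ]
      module
    rw [hb_eq]
    exact add_mem (sub_mem (Submodule.smul_mem _ _ hQ_mem) (Submodule.smul_mem _ _ hP_mem))
      (Submodule.smul_mem _ _ h1_mem)

lemma trace₁₂_act {g : Mat3} (hg : gᵀ * g = 1) (T : T4) :
    trace₁₂ (act g T) = g * trace₁₂ T * gᵀ := by
  ext i j
  let X : Mat3 := Matrix.of fun p q => ∑ r, ∑ s, g i r * g j s * T p q r s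
  have hX : ∀ k, act g T k k i j = (g * X * gᵀ) k k := fun k => by
    simp only [act, Matrix.mul_mul_transpose_apply, X, Matrix.of_apply, Finset.mul_sum, mul_assoc]
  calc trace₁₂ (act g T) i j = (g * X * gᵀ).trace := by
        simp only [trace₁₂, Matrix.of_apply, hX, Matrix.trace, Matrix.diag]
    _ = X.trace := by rw [Matrix.trace_mul_cycle, hg, Matrix.one_mul]
    _ = (g * trace₁₂ T * gᵀ) i j := by
        simp only [Matrix.trace, Matrix.diag, X, Matrix.of_apply, Matrix.mul_mul_transpose_apply,
          trace₁₂, Finset.mul_sum]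
        rw [Finset.sum_comm]
        exact Fintype.sum_congr _ _ fun r => Finset.sum_comm

lemma trace₁₃_act {g : Mat3} (hg : gᵀ * g = 1) (T : T4) :
    trace₁₃ (act g T) = g * trace₁₃ T * gᵀ := by
  ext i j
  let X : Mat3 := Matrix.of fun p r => ∑ q, ∑ s, g i q * g j s * T p q r s
  have hX : ∀ k, act g T k i k j = (g * X * gᵀ) k k := fun k => by
    simp only [act, Matrix.mul_mul_transpose_apply, X, Matrix.of_apply, Finset.mul_sum]
    refine Fintype.sum_congr _ _ fun p => ?_
    rw [Finset.sum_comm]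
    exact Fintype.sum_congr _ _ fun r => Fintype.sum_congr _ _ fun q =>
      Fintype.sum_congr _ _ fun s => by ring
  calc trace₁₃ (act g T) i j = (g * X * gᵀ).trace := by
        simp only [trace₁₃, Matrix.of_apply, hX, Matrix.trace, Matrix.diag]
    _ = X.trace := by rw [Matrix.trace_mul_cycle, hg, Matrix.one_mul]
    _ = (g * trace₁₃ T * gᵀ) i j := by
        simp only [Matrix.trace, Matrix.diag, X, Matrix.of_apply, Matrix.mul_mul_transpose_apply,
          trace₁₃, Finset.mul_sum]
        rw [Finset.sum_comm]
        exact Fintype.sum_congr _ _ fun r => Finset.sum_comm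

def flat (T : T4) : Matrix (Fin 3 × Fin 3) (Fin 3 × Fin 3) ℝ :=
  Matrix.of fun p q => T p.1 p.2 q.1 q.2

lemma flat_injective : Function.Injective flat := by
  intro T T' h
  funext i j k l
  exact congrFun (congrFun h (i, j)) (k, l)

lemma flat_sqT (T : T4) : flat (sqT T) = flat T * flat T := by
  ext ⟨i, j⟩ ⟨k, l⟩
  simp only [flat, sqT, Matrix.of_apply, Matrix.mul_apply, Fintype.sum_prod_type]

open Kronecker in
lemma flat_act (g : Mat3) (T : T4) : flat (act g T) = (g ⊗ₖ g) * flat T * (g ⊗ₖ g)ᵀ := by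
  ext ⟨i, j⟩ ⟨k, l⟩
  simp only [flat, act, Matrix.of_apply, Matrix.mul_apply, Matrix.transpose_apply,
    Matrix.kroneckerMap_apply, Fintype.sum_prod_type, Fin.sum_univ_three]
  ring

open Kronecker in
lemma sqT_act {g : Mat3} (hg : gᵀ * g = 1) (T : T4) : sqT (act g T) = act g (sqT T) := by
  have hK : (g ⊗ₖ g)ᵀ * (g ⊗ₖ g) = 1 := by
    rw [← Matrix.kroneckerMap_transpose, ← Matrix.mul_kronecker_mul, hg, Matrix.one_kronecker_one]
  apply flat_injective
  rw [flat_sqT, flat_act, flat_act, flat_sqT]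
  simp only [Matrix.mul_assoc]
  rw [← Matrix.mul_assoc (g ⊗ₖ g)ᵀ, hK, Matrix.one_mul]

lemma d2_act {g : Mat3} (hg : gᵀ * g = 1) (D : T4) : d2 (act g D) = g * d2 D * gᵀ := by
  rw [d2_eq_trace₁₃_sqT, d2_eq_trace₁₃_sqT, sqT_act hg, trace₁₃_act hg]

theorem stabilizer_elasticity_eq_stabilizer_D_general (C : T4)
    (lam mu : ℝ) (a b : Mat3) (D : T4)
    (ha : aᵀ = a) (hb : bᵀ = b)
    (hD : IsHarm D) (hdec : HarmDecomp C lam mu a b D)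
    (hMGA : ∀ g : Mat3, IsSO3 g → g * d2 D * gᵀ = d2 D →
      g * a * gᵀ = a ∧ g * b * gᵀ = b) :
    ∀ g : Mat3, IsSO3 g → (act g C = C ↔ act g D = D) := by
  rintro g ⟨hg, hdet⟩
  have hg' : gᵀ * g = 1 := mul_eq_one_comm.mp hg
  rw [harmDecomp_iff] at hdec
  constructor
  · intro hC
    have hfix : ∀ x ∈ ({trace₁₂ C, trace₁₃ C, 1} : Set Mat3), g * x * gᵀ = x := by
      simp only [Set.mem_insert_iff, Set.mem_singleton_iff, forall_eq_or_imp, forall_eq]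
      exact ⟨by rw [← trace₁₂_act hg', hC], by rw [← trace₁₃_act hg', hC],
        by rw [Matrix.mul_one, hg]⟩
    obtain ⟨ha_mem, hb_mem⟩ :=
      mem_span_traces_of_eq_ofHarmComponents ha hb hD.trace₁₂_eq_zero hD.trace₁₃_eq_zero hdec
    rw [hdec, act_ofHarmComponents hg, g.mul_mul_transpose_eq_self_of_mem_span hfix ha_mem,
      g.mul_mul_transpose_eq_self_of_mem_span hfix hb_mem] at hC
    simpa only [ofHarmComponents, add_right_inj] using hC
  · intro hgD
    obtain ⟨hga, hgb⟩ := hMGA g ⟨hg, hdet⟩ (by rw [← d2_act hg', hgD])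
    rw [hdec, act_ofHarmComponents hg, hga, hgb, hgD]

/-- (material genericity assumption) if the stabilizer in `SO(3)` of the
covariant `d₂(D)` is contained in the stabilizers of `a` and of `b`, then the stabilizer of
the elasticity tensor `C` equals the stabilizer of its harmonic part `D`. -/
theorem stabilizer_elasticity_eq_stabilizer_D (C : T4) (hC : IsEla C)
    (lam mu : ℝ) (a b : Mat3) (D : T4)
    (ha : aᵀ = a) (ha0 : a.trace = 0) (hb : bᵀ = b) (hb0 : b.trace = 0)
    (hD : IsHarm D) (hdec : HarmDecomp C lam mu a b D)
    (hMGA : ∀ g : Mat3, IsSO3 g → g * d2 D * gᵀ = d2 D →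
      g * a * gᵀ = a ∧ g * b * gᵀ = b) :
    ∀ g : Mat3, IsSO3 g → (act g C = C ↔ act g D = D) :=
  stabilizer_elasticity_eq_stabilizer_D_general C lam mu a b D ha hb hD hdec hMGA
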